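/- Given M symmetric positive definite and F ≠ 0, the unique vector v* ∈ R^d satisfying v*' M v* = v' M v, v*' F = -v' F, and v* - v ∈ span(M^{-1} F) is v* = R(v) = v - 2 (v'F)/(F' M^{-1} F) M^{-1} F (assuming v' F ≠ 0; if v'F = 0 then v* = v). -/

import Mathlib

open Matrix

/-!
Writing `u = M⁻¹F`, every candidate is `w = v + c u`. Since `M u = F` and `M` is symmetric,
`w'Mw - v'Mv = c (w'F + v'F)`, so reversing the component along `F` already conserves the
kinetic energy, and the reversal condition `v'F + c F'M⁻¹F = -v'F` is linear in `c` with the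
single root `c = -2 v'F / F'M⁻¹F`.
-/

section LineReflection

variable {n : Type*} [Fintype n]

theorem dotProduct_mulVec_add_smul {R : Type*} [CommRing R] {M : Matrix n n R} {u F : n → R}
    (hM : M.IsSymm) (hu : M *ᵥ u = F) (v : n → R) (c : R) :
    (v + c • u) ⬝ᵥ (M *ᵥ (v + c • u)) =
      v ⬝ᵥ (M *ᵥ v) + c * ((v + c • u) ⬝ᵥ F + v ⬝ᵥ F) := by
  have huv : u ⬝ᵥ (M *ᵥ v) = v ⬝ᵥ F := by
    rw [dotProduct_mulVec, ← mulVec_transpose, hM.eq, hu, dotProduct_comm]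
  simp only [mulVec_add, mulVec_smul, add_dotProduct, dotProduct_add, smul_dotProduct,
    dotProduct_smul, smul_eq_mul, huv, hu]
  ring

variable {K : Type*} [Field K] {M : Matrix n n K} {u F : n → K}

theorem add_smul_dotProduct_eq_neg_iff (huF : F ⬝ᵥ u ≠ 0) (v : n → K) (c : K) :
    (v + c • u) ⬝ᵥ F = -(v ⬝ᵥ F) ↔ c = -(2 * (v ⬝ᵥ F) / (F ⬝ᵥ u)) := by
  rw [add_dotProduct, smul_dotProduct, smul_eq_mul, dotProduct_comm u, eq_neg_iff_add_eq_zero,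
    ← neg_div, eq_div_iff huF]
  constructor <;> intro h <;> linear_combination h

theorem energy_reversal_on_line_iff (hM : M.IsSymm) (hu : M *ᵥ u = F) (huF : F ⬝ᵥ u ≠ 0)
    (v w : n → K) :
    (w ⬝ᵥ (M *ᵥ w) = v ⬝ᵥ (M *ᵥ v) ∧ w ⬝ᵥ F = -(v ⬝ᵥ F) ∧ ∃ c : K, w - v = c • u) ↔
      w = v - (2 * (v ⬝ᵥ F) / (F ⬝ᵥ u)) • u := by
  constructor
  · rintro ⟨-, hrev, c, hc⟩
    obtain rfl : w = v + c • u := sub_eq_iff_eq_add'.mp hc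
    rw [(add_smul_dotProduct_eq_neg_iff huF v c).mp hrev, neg_smul, sub_eq_add_neg]
  · rintro rfl
    rw [sub_eq_add_neg, ← neg_smul]
    have hrev := (add_smul_dotProduct_eq_neg_iff huF v _).mpr rfl
    refine ⟨?_, hrev, _, add_sub_cancel_left _ _⟩
    rw [dotProduct_mulVec_add_smul hM hu, hrev, neg_add_cancel, mul_zero, add_zero]

end LineReflection

theorem reflection_unique_general {d : ℕ}
    (M : Matrix (Fin d) (Fin d) ℝ) (hM : M.PosDef)
    (F : Fin d → ℝ) (v : Fin d → ℝ) :
    (v ⬝ᵥ F ≠ 0 → ∀ w : Fin d → ℝ,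
      (w ⬝ᵥ (M *ᵥ w) = v ⬝ᵥ (M *ᵥ v) ∧ w ⬝ᵥ F = -(v ⬝ᵥ F) ∧
        ∃ c : ℝ, w - v = c • (M⁻¹ *ᵥ F))
      ↔ w = v - (2 * (v ⬝ᵥ F) / (F ⬝ᵥ (M⁻¹ *ᵥ F))) • (M⁻¹ *ᵥ F)) ∧
    (v ⬝ᵥ F = 0 → v - (2 * (v ⬝ᵥ F) / (F ⬝ᵥ (M⁻¹ *ᵥ F))) • (M⁻¹ *ᵥ F) = v) := by
  have hMu : M *ᵥ (M⁻¹ *ᵥ F) = F := by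
    rw [mulVec_mulVec, mul_nonsing_inv _ ((isUnit_iff_isUnit_det M).mp hM.isUnit), one_mulVec]
  refine ⟨fun hvF w => energy_reversal_on_line_iff (isHermitian_iff_isSymm.mp hM.1) hMu ?_ v w,
    fun hvF => by simp [hvF]⟩
  have hF : F ≠ 0 := by
    rintro rfl
    exact hvF (dotProduct_zero v)
  exact (hM.inv.dotProduct_mulVec_pos hF).ne'

/-- `R(v)` is the unique vector on the line `v + ℝ·M⁻¹F` that conserves the kinetic energy
and reverses the component of the velocity along `F`; if `v'F = 0` then `R(v) = v`. -/
theorem reflection_unique {d : ℕ}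
    (M : Matrix (Fin d) (Fin d) ℝ) (hM : M.PosDef)
    (F : Fin d → ℝ) (hF : F ≠ 0) (v : Fin d → ℝ) :
    (v ⬝ᵥ F ≠ 0 → ∀ w : Fin d → ℝ,
      (w ⬝ᵥ (M *ᵥ w) = v ⬝ᵥ (M *ᵥ v) ∧ w ⬝ᵥ F = -(v ⬝ᵥ F) ∧
        ∃ c : ℝ, w - v = c • (M⁻¹ *ᵥ F))
      ↔ w = v - (2 * (v ⬝ᵥ F) / (F ⬝ᵥ (M⁻¹ *ᵥ F))) • (M⁻¹ *ᵥ F)) ∧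
    (v ⬝ᵥ F = 0 → v - (2 * (v ⬝ᵥ F) / (F ⬝ᵥ (M⁻¹ *ᵥ F))) • (M⁻¹ *ᵥ F) = v) :=
  reflection_unique_general M hM F v
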